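/- arXiv:2504.08477 — 5 statements merged into one kernel-verified Lean document; each statement's English description precedes it below -/
import Mathlib

section
/- Desargues' theorem in the plane: if two triangles ABC and A'B'C' are perspective from a point (the lines AA', BB', CC' are concurrent), then the three intersection points of corresponding side lines AB∩A'B', BC∩B'C', CA∩C'A' are collinear. -/
open Submodule

/-- Three nonzero vectors of `ℝ³` represent collinear points of `ℙ²(ℝ)` iff they span a
subspace of dimension at most two. -/
def ProjCollinear (P Q R : Fin 3 → ℝ) : Prop :=
  Module.finrank ℝ (span ℝ {P, Q, R}) ≤ 2

private lemma pair_indep (X Y Z : Fin 3 → ℝ) (h : LinearIndependent ℝ ![X, Y, Z]) (s t : ℝ)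
    (hst : s • X + t • Y = 0) : s = 0 ∧ t = 0 := by
  have h2 := Fintype.linearIndependent_iff.mp h ![s, t, 0] ?_
  · exact ⟨h2 0, h2 1⟩
  · simpa [Fin.sum_univ_three] using hst

private lemma pair_indep23 (X Y Z : Fin 3 → ℝ) (h : LinearIndependent ℝ ![X, Y, Z]) (s t : ℝ)
    (hst : s • Y + t • Z = 0) : s = 0 ∧ t = 0 := by
  have h2 := Fintype.linearIndependent_iff.mp h ![0, s, t] ?_
  · exact ⟨h2 1, h2 2⟩
  · simpa [Fin.sum_univ_three] using hst

private lemma pair_indep31 (X Y Z : Fin 3 → ℝ) (h : LinearIndependent ℝ ![X, Y, Z]) (s t : ℝ)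
    (hst : s • Z + t • X = 0) : s = 0 ∧ t = 0 := by
  have h2 := Fintype.linearIndependent_iff.mp h ![t, 0, s] ?_
  · exact ⟨h2 2, h2 0⟩
  · simpa [Fin.sum_univ_three, add_comm] using hst

private lemma nonzero_aux (X Y X' Y' O : Fin 3 → ℝ)
    (hXY : ∀ s t : ℝ, s • X + t • Y = 0 → s = 0 ∧ t = 0)
    (hXY' : ∀ s t : ℝ, s • X' + t • Y' = 0 → s = 0 ∧ t = 0)
    {x y x' y' : ℝ} (hx : x • X + x' • X' = O) (hy : y • Y + y' • Y' = O)
    (hO : O ≠ 0) : x • X - y • Y ≠ 0 := by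
  intro h0
  have h1 : x • X + (-y) • Y = 0 := by rw [neg_smul, ← sub_eq_add_neg]; exact h0
  obtain ⟨hx0, hy0⟩ := hXY _ _ h1
  have hy0' : y = 0 := neg_eq_zero.mp hy0
  subst hx0; subst hy0'
  simp only [zero_smul, zero_add] at hx hy
  have h2 : x' • X' + (-y') • Y' = 0 := by
    rw [neg_smul, ← sub_eq_add_neg, sub_eq_zero, hx, hy]
  obtain ⟨hx'0, _⟩ := hXY' _ _ h2
  exact hO (by rw [← hx, hx'0, zero_smul])

/-- **Desargues' theorem in the plane.**  If the triangles `ABC` and `A'B'C'` of `ℙ²(ℝ)`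
(given by homogeneous coordinate vectors) are perspective from a point `O`, then the
intersection points of the corresponding side lines are collinear. -/
theorem desargues_plane (A B C A' B' C' : Fin 3 → ℝ)
    (hABC : LinearIndependent ℝ ![A, B, C])
    (hABC' : LinearIndependent ℝ ![A', B', C'])
    (hAA' : span ℝ {A} ≠ span ℝ {A'})
    (hBB' : span ℝ {B} ≠ span ℝ {B'})
    (hCC' : span ℝ {C} ≠ span ℝ {C'})
    (hAB : span ℝ {A, B} ≠ span ℝ {A', B'})
    (hBC : span ℝ {B, C} ≠ span ℝ {B', C'})
    (hCA : span ℝ {C, A} ≠ span ℝ {C', A'})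
    (O : Fin 3 → ℝ) (hO : O ≠ 0)
    (hOA : O ∈ span ℝ {A, A'}) (hOB : O ∈ span ℝ {B, B'}) (hOC : O ∈ span ℝ {C, C'}) :
    ∃ P Q R : Fin 3 → ℝ, P ≠ 0 ∧ Q ≠ 0 ∧ R ≠ 0 ∧
      P ∈ span ℝ {A, B} ⊓ span ℝ {A', B'} ∧
      Q ∈ span ℝ {B, C} ⊓ span ℝ {B', C'} ∧
      R ∈ span ℝ {C, A} ⊓ span ℝ {C', A'} ∧
      ProjCollinear P Q R := by
  obtain ⟨a, a', ha⟩ := mem_span_pair.mp hOA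
  obtain ⟨b, b', hb⟩ := mem_span_pair.mp hOB
  obtain ⟨c, c', hc⟩ := mem_span_pair.mp hOC
  refine ⟨a • A - b • B, b • B - c • C, c • C - a • A, ?_, ?_, ?_, ?_, ?_, ?_, ?_⟩
  · exact nonzero_aux A B A' B' O (pair_indep A B C hABC) (pair_indep A' B' C' hABC') ha hb hO
  · exact nonzero_aux B C B' C' O (pair_indep23 A B C hABC) (pair_indep23 A' B' C' hABC') hb hc hO
  · exact nonzero_aux C A C' A' O (pair_indep31 A B C hABC) (pair_indep31 A' B' C' hABC') hc ha hO
  -- memberships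
  · refine ⟨mem_span_pair.mpr ⟨a, -b, by module⟩, mem_span_pair.mpr ⟨-a', b', ?_⟩⟩
    have h := ha.trans hb.symm
    have : a • A - b • B = b' • B' - a' • A' := by
      rw [sub_eq_sub_iff_add_eq_add, add_comm (b' • B'), ← h]
    rw [this]; module
  · refine ⟨mem_span_pair.mpr ⟨b, -c, by module⟩, mem_span_pair.mpr ⟨-b', c', ?_⟩⟩
    have h := hb.trans hc.symm
    have : b • B - c • C = c' • C' - b' • B' := by
      rw [sub_eq_sub_iff_add_eq_add, add_comm (c' • C'), ← h]
    rw [this]; module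
  · refine ⟨mem_span_pair.mpr ⟨c, -a, by module⟩, mem_span_pair.mpr ⟨-c', a', ?_⟩⟩
    have h := hc.trans ha.symm
    have : c • C - a • A = a' • A' - c' • C' := by
      rw [sub_eq_sub_iff_add_eq_add, add_comm (a' • A'), ← h]
    rw [this]; module
  -- collinearity
  · have hsub : span ℝ {a • A - b • B, b • B - c • C, c • C - a • A}
        ≤ span ℝ {a • A - b • B, b • B - c • C} := by
      refine span_le.mpr ?_
      rintro x (rfl | rfl | rfl)
      · exact subset_span (by simp)
      · exact subset_span (by simp)
      · exact mem_span_pair.mpr ⟨-1, -1, by module⟩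
    refine le_trans (Submodule.finrank_mono hsub) ?_
    refine (finrank_span_le_card _).trans ?_
    simp [Set.toFinset_insert]
    exact Finset.card_insert_le _ _
end

section
/- The converse of Desargues' theorem: if two triangles ABC and A'B'C' in a projective plane over a field are perspective from a line (the points AB∩A'B', BC∩B'C', CA∩C'A' are collinear), then they are perspective from a point (the lines AA', BB', CC' are concurrent). -/
open Submodule

lemma desargues_aux {k : Type*} [Field k] {u v : Fin 3 → k} (hu : u ≠ 0) (hv : v ≠ 0)
    (h : span k {u} ≠ span k {v}) {s t : k} (hst : s • u = t • v) : s = 0 ∧ t = 0 := by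
  by_cases hs : s = 0
  · refine ⟨hs, ?_⟩
    by_contra ht
    apply hv
    have : t • v = 0 := by rw [← hst, hs, zero_smul]
    simpa [ht] using this
  · exfalso
    have ht : t ≠ 0 := by
      rintro rfl
      rw [zero_smul] at hst
      exact hu (by simpa [hs] using hst)
    apply h
    have hv' : v = (t⁻¹ * s) • u := by
      rw [mul_smul, hst, inv_smul_smul₀ ht]
    calc span k {u} = span k {(t⁻¹ * s) • u} :=
          (span_singleton_smul_eq (IsUnit.mk0 _ (by simp [hs, ht])) u).symm
      _ = span k {v} := by rw [← hv']

/-- **Converse of Desargues' theorem.**  If the triangles `ABC` and `A'B'C'` of the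
projective plane `ℙ²(k)` over a field `k` (given by homogeneous coordinate vectors) are
perspective from a line (the intersection points of corresponding side lines are collinear),
then they are perspective from a point (the lines `AA'`, `BB'`, `CC'` are concurrent). -/
theorem desargues_converse (k : Type*) [Field k] (A B C A' B' C' : Fin 3 → k)
    (hABC : LinearIndependent k ![A, B, C])
    (hABC' : LinearIndependent k ![A', B', C'])
    (hAA' : span k {A} ≠ span k {A'})
    (hBB' : span k {B} ≠ span k {B'})
    (hCC' : span k {C} ≠ span k {C'})
    (hAB : span k {A, B} ≠ span k {A', B'})
    (hBC : span k {B, C} ≠ span k {B', C'})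
    (hCA : span k {C, A} ≠ span k {C', A'})
    (P Q R : Fin 3 → k) (hP : P ≠ 0) (hQ : Q ≠ 0) (hR : R ≠ 0)
    (hPmem : P ∈ span k {A, B} ⊓ span k {A', B'})
    (hQmem : Q ∈ span k {B, C} ⊓ span k {B', C'})
    (hRmem : R ∈ span k {C, A} ⊓ span k {C', A'})
    (hcol : Module.finrank k (span k {P, Q, R}) ≤ 2) :
    ∃ O : Fin 3 → k, O ≠ 0 ∧
      O ∈ span k {A, A'} ∧ O ∈ span k {B, B'} ∧ O ∈ span k {C, C'} := by
  obtain ⟨a, b, hPab⟩ := mem_span_pair.mp hPmem.1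
  obtain ⟨a', b', hPab'⟩ := mem_span_pair.mp hPmem.2
  obtain ⟨c, d, hQcd⟩ := mem_span_pair.mp hQmem.1
  obtain ⟨c', d', hQcd'⟩ := mem_span_pair.mp hQmem.2
  obtain ⟨e, f, hRef⟩ := mem_span_pair.mp hRmem.1
  obtain ⟨e', f', hRef'⟩ := mem_span_pair.mp hRmem.2
  -- P, Q, R are linearly dependent
  have hdep : ¬ LinearIndependent k ![P, Q, R] := by
    intro h
    have hrange : Set.range ![P, Q, R] = {P, Q, R} := by
      ext x
      constructor
      · rintro ⟨i, rfl⟩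
        fin_cases i <;> simp
      · rintro (rfl | rfl | rfl)
        exacts [⟨0, rfl⟩, ⟨1, rfl⟩, ⟨2, rfl⟩]
    have := finrank_span_eq_card h
    rw [hrange, Fintype.card_fin] at this
    omega
  obtain ⟨g, hgsum, i0, hgi0⟩ := Fintype.not_linearIndependent_iff.mp hdep
  set L := g 0 with hL
  set M := g 1 with hM
  set N := g 2 with hN
  have hsum : L • P + M • Q + N • R = 0 := by
    have := hgsum
    rw [Fin.sum_univ_three] at this
    simpa using this
  -- coefficient equations w.r.t. A, B, C
  have hcoef : ∀ i, ![L * a + N * f, L * b + M * c, M * d + N * e] i = 0 := by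
    apply Fintype.linearIndependent_iff.mp hABC
    rw [Fin.sum_univ_three]
    simp only [Matrix.cons_val_zero, Matrix.cons_val_one, Matrix.head_cons,
      Matrix.cons_val_two, Matrix.tail_cons]
    have : L • P + M • Q + N • R = 0 := hsum
    rw [← hPab, ← hQcd, ← hRef] at this
    rw [← this]
    module
  have hcoef' : ∀ i, ![L * a' + N * f', L * b' + M * c', M * d' + N * e'] i = 0 := by
    apply Fintype.linearIndependent_iff.mp hABC'
    rw [Fin.sum_univ_three]
    simp only [Matrix.cons_val_zero, Matrix.cons_val_one, Matrix.head_cons,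
      Matrix.cons_val_two, Matrix.tail_cons]
    have : L • P + M • Q + N • R = 0 := hsum
    rw [← hPab', ← hQcd', ← hRef'] at this
    rw [← this]
    module
  have h1 : L * a + N * f = 0 := hcoef 0
  have h2 : L * b + M * c = 0 := hcoef 1
  have h3 : M * d + N * e = 0 := hcoef 2
  have h1' : L * a' + N * f' = 0 := hcoef' 0
  have h2' : L * b' + M * c' = 0 := hcoef' 1
  have h3' : M * d' + N * e' = 0 := hcoef' 2
  -- the center of perspectivity
  refine ⟨(L * a) • A - (L * a') • A', ?_, ?_, ?_, ?_⟩
  · -- nonzero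
    intro hO
    have hA : A ≠ 0 := hABC.ne_zero 0
    have hB : B ≠ 0 := hABC.ne_zero 1
    have hC : C ≠ 0 := hABC.ne_zero 2
    have hA' : A' ≠ 0 := hABC'.ne_zero 0
    have hB' : B' ≠ 0 := hABC'.ne_zero 1
    have hC' : C' ≠ 0 := hABC'.ne_zero 2
    have eA : (L * a) • A = (L * a') • A' := by
      rwa [sub_eq_zero] at hO
    obtain ⟨hLa, hLa'⟩ := desargues_aux hA hA' hAA' eA
    -- L•P in two ways
    have eB : (L * b) • B = (L * b') • B' := by
      have e1 : L • P = (L * a) • A + (L * b) • B := by rw [← hPab]; module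
      have e2 : L • P = (L * a') • A' + (L * b') • B' := by rw [← hPab']; module
      have := e1.symm.trans e2
      rw [hLa, hLa', zero_smul, zero_smul, zero_add, zero_add] at this
      exact this
    obtain ⟨hLb, hLb'⟩ := desargues_aux hB hB' hBB' eB
    -- N•R in two ways: N*f = -(L*a) = 0, N*f' = 0
    have hNf : N * f = 0 := by linear_combination h1 - hLa
    have hNf' : N * f' = 0 := by linear_combination h1' - hLa'
    have eC : (N * e) • C = (N * e') • C' := by
      have e1 : N • R = (N * e) • C + (N * f) • A := by rw [← hRef]; module
      have e2 : N • R = (N * e') • C' + (N * f') • A' := by rw [← hRef']; module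
      have := e1.symm.trans e2
      rw [hNf, hNf', zero_smul, zero_smul, add_zero, add_zero] at this
      exact this
    obtain ⟨hNe, hNe'⟩ := desargues_aux hC hC' hCC' eC
    have hMc : M * c = 0 := by linear_combination h2 - hLb
    have hMd : M * d = 0 := by linear_combination h3 - hNe
    fin_cases i0
    · -- L ≠ 0
      apply hP
      rw [← hPab]
      have ha : a = 0 := by
        rcases mul_eq_zero.mp hLa with h | h; · exact absurd h hgi0
        · exact h
      have hb : b = 0 := by
        rcases mul_eq_zero.mp hLb with h | h; · exact absurd h hgi0
        · exact h
      rw [ha, hb, zero_smul, zero_smul, add_zero]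
    · -- M ≠ 0
      apply hQ
      rw [← hQcd]
      have hc : c = 0 := by
        rcases mul_eq_zero.mp hMc with h | h; · exact absurd h hgi0
        · exact h
      have hd : d = 0 := by
        rcases mul_eq_zero.mp hMd with h | h; · exact absurd h hgi0
        · exact h
      rw [hc, hd, zero_smul, zero_smul, add_zero]
    · -- N ≠ 0
      apply hR
      rw [← hRef]
      have he : e = 0 := by
        rcases mul_eq_zero.mp hNe with h | h; · exact absurd h hgi0
        · exact h
      have hf : f = 0 := by
        rcases mul_eq_zero.mp hNf with h | h; · exact absurd h hgi0
        · exact h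
      rw [he, hf, zero_smul, zero_smul, add_zero]
  · exact mem_span_pair.mpr ⟨L * a, -(L * a'), by module⟩
  · -- = (L*b')•B' - (L*b)•B
    apply mem_span_pair.mpr ⟨-(L * b), L * b', ?_⟩
    have e1 : L • P = (L * a) • A + (L * b) • B := by rw [← hPab]; module
    have e2 : L • P = (L * a') • A' + (L * b') • B' := by rw [← hPab']; module
    have h := e1.symm.trans e2
    linear_combination (norm := module) -h
  · -- = (N*e)•C - (N*e')•C'
    apply mem_span_pair.mpr ⟨N * e, -(N * e'), ?_⟩
    have e1 : N • R = (N * e) • C + (N * f) • A := by rw [← hRef]; module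
    have e2 : N • R = (N * e') • C' + (N * f') • A' := by rw [← hRef']; module
    have h := e1.symm.trans e2
    -- (N*f)•A - (N*f')•A' = (N*e')•C' - (N*e)•C ; N*f = -(L*a), N*f' = -(L*a')
    have hf1 : N * f = -(L * a) := by linear_combination h1
    have hf1' : N * f' = -(L * a') := by linear_combination h1'
    rw [hf1, hf1'] at h
    linear_combination (norm := module) h
end

section
/- The spatial Desargues theorem: if two triangles ABC and A'B'C' lie in two distinct planes of projective 3-space and the lines AA', BB', CC' are concurrent at a point O not in either plane, then the intersection points of corresponding side lines AB∩A'B', BC∩B'C', CA∩C'A' all lie on the line of intersection of the two planes. -/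
open Submodule

private lemma triple_coeffs {A B C : Fin 4 → ℝ} (h : LinearIndependent ℝ ![A, B, C])
    {a b c : ℝ} (hab : a • A + b • B + c • C = 0) : a = 0 ∧ b = 0 ∧ c = 0 := by
  have h2 := Fintype.linearIndependent_iff.mp h ![a, b, c]
    (by simpa [Fin.sum_univ_three] using hab)
  exact ⟨h2 0, h2 1, h2 2⟩

private lemma meet_exists {A B A' B' O : Fin 4 → ℝ}
    {π' : Submodule ℝ (Fin 4 → ℝ)} (hA' : A' ∈ π') (hOπ' : O ∉ π')
    (hind : ∀ a b : ℝ, a • A + b • B = 0 → a = 0)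
    (hOA : O ∈ span ℝ {A, A'}) (hOB : O ∈ span ℝ {B, B'}) :
    ∃ P : Fin 4 → ℝ, P ≠ 0 ∧ P ∈ span ℝ {A, B} ⊓ span ℝ {A', B'} := by
  obtain ⟨a, a', ha⟩ := mem_span_pair.mp hOA
  obtain ⟨b, b', hb⟩ := mem_span_pair.mp hOB
  have hane : a ≠ 0 := by
    rintro rfl
    exact hOπ' (by rw [← ha]; simpa using smul_mem π' a' hA')
  refine ⟨a • A - b • B, ?_, ?_, ?_⟩
  · intro h
    exact hane (hind a (-b) (by simpa [sub_eq_add_neg] using h))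
  · exact mem_span_pair.mpr ⟨a, -b, by module⟩
  · have key : a • A - b • B = b' • B' - a' • A' := by
      have h := ha.trans hb.symm
      linear_combination (norm := module) h
    rw [key]
    exact mem_span_pair.mpr ⟨-a', b', by module⟩

/-- **Spatial Desargues theorem.**  In `ℙ³(ℝ)` (modeled by `ℝ⁴`), if the triangles `ABC`
and `A'B'C'` lie in two distinct planes `π`, `π'` and the lines `AA'`, `BB'`, `CC'` are
concurrent at a point `O` lying in neither plane, then the corresponding side lines meet,
and all their intersection points lie on the line `π ∩ π'`. -/
theorem desargues_spatial (A B C A' B' C' O : Fin 4 → ℝ)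
    (π π' : Submodule ℝ (Fin 4 → ℝ))
    (hπ : Module.finrank ℝ π = 3) (hπ' : Module.finrank ℝ π' = 3) (hππ' : π ≠ π')
    (hA : A ∈ π) (hB : B ∈ π) (hC : C ∈ π)
    (hA' : A' ∈ π') (hB' : B' ∈ π') (hC' : C' ∈ π')
    (hABC : LinearIndependent ℝ ![A, B, C])
    (hABC' : LinearIndependent ℝ ![A', B', C'])
    (hO : O ≠ 0) (hOπ : O ∉ π) (hOπ' : O ∉ π')
    (hOA : O ∈ span ℝ {A, A'}) (hOB : O ∈ span ℝ {B, B'}) (hOC : O ∈ span ℝ {C, C'}) :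
    (∃ P : Fin 4 → ℝ, P ≠ 0 ∧ P ∈ span ℝ {A, B} ⊓ span ℝ {A', B'}) ∧
    (∃ Q : Fin 4 → ℝ, Q ≠ 0 ∧ Q ∈ span ℝ {B, C} ⊓ span ℝ {B', C'}) ∧
    (∃ R : Fin 4 → ℝ, R ≠ 0 ∧ R ∈ span ℝ {C, A} ⊓ span ℝ {C', A'}) ∧
    (∀ X : Fin 4 → ℝ, X ≠ 0 →
      (X ∈ span ℝ {A, B} ⊓ span ℝ {A', B'} ∨
       X ∈ span ℝ {B, C} ⊓ span ℝ {B', C'} ∨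
       X ∈ span ℝ {C, A} ⊓ span ℝ {C', A'}) → X ∈ π ⊓ π') := by
  have indAB : ∀ a b : ℝ, a • A + b • B = 0 → a = 0 := fun a b h =>
    (triple_coeffs hABC (c := 0) (by simpa using h)).1
  have indBC : ∀ a b : ℝ, a • B + b • C = 0 → a = 0 := fun a b h =>
    (triple_coeffs hABC (a := 0) (by simpa using h)).2.1
  have indCA : ∀ a b : ℝ, a • C + b • A = 0 → a = 0 := fun a b h =>
    (triple_coeffs hABC (a := b) (b := 0) (c := a) (by
      simpa [add_comm] using h)).2.2
  have sπ : ∀ {X Y : Fin 4 → ℝ}, X ∈ π → Y ∈ π → span ℝ {X, Y} ≤ π := fun hX hY =>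
    span_le.mpr (Set.insert_subset_iff.mpr ⟨hX, Set.singleton_subset_iff.mpr hY⟩)
  have sπ' : ∀ {X Y : Fin 4 → ℝ}, X ∈ π' → Y ∈ π' → span ℝ {X, Y} ≤ π' := fun hX hY =>
    span_le.mpr (Set.insert_subset_iff.mpr ⟨hX, Set.singleton_subset_iff.mpr hY⟩)
  refine ⟨meet_exists hA' hOπ' indAB hOA hOB,
         meet_exists hB' hOπ' indBC hOB hOC,
         meet_exists hC' hOπ' indCA hOC hOA, ?_⟩
  rintro X _ (⟨h1, h2⟩ | ⟨h1, h2⟩ | ⟨h1, h2⟩)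
  · exact ⟨sπ hA hB h1, sπ' hA' hB' h2⟩
  · exact ⟨sπ hB hC h1, sπ' hB' hC' h2⟩
  · exact ⟨sπ hC hA h1, sπ' hC' hA' h2⟩
end

section
/- In an affine plane over a field, if two triangles ABC and A'B'C' have pairwise parallel corresponding sides (AB ∥ A'B', BC ∥ B'C', CA ∥ C'A') and are not translates of each other, then the lines AA', BB', CC' are concurrent; if they are translates, these lines are parallel. (Affine 'little Desargues'/homothety version.) -/
/-- **Affine Desargues (homothety version).**  In the affine plane `k²` over a field `k`,
if two nondegenerate triangles have pairwise parallel corresponding sides, then: if they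
are not translates of each other, the lines `AA'`, `BB'`, `CC'` are concurrent; if they
are translates of each other, these lines are pairwise parallel. -/
theorem affine_desargues_homothety (k : Type*) [Field k]
    (A B C A' B' C' : Fin 2 → k)
    (hABC : AffineIndependent k ![A, B, C])
    (hABC' : AffineIndependent k ![A', B', C'])
    (hAB : ∃ t : k, t ≠ 0 ∧ B' - A' = t • (B - A))
    (hBC : ∃ t : k, t ≠ 0 ∧ C' - B' = t • (C - B))
    (hCA : ∃ t : k, t ≠ 0 ∧ A' - C' = t • (A - C)) :
    (¬ (∃ v : Fin 2 → k, A' = A + v ∧ B' = B + v ∧ C' = C + v) →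
      ∃ O : Fin 2 → k, Collinear k {A, A', O} ∧ Collinear k {B, B', O} ∧
        Collinear k {C, C', O}) ∧
    ((∃ v : Fin 2 → k, A' = A + v ∧ B' = B + v ∧ C' = C + v) →
      AffineSubspace.Parallel (affineSpan k {A, A'}) (affineSpan k {B, B'}) ∧
      AffineSubspace.Parallel (affineSpan k {B, B'}) (affineSpan k {C, C'}) ∧
      AffineSubspace.Parallel (affineSpan k {C, C'}) (affineSpan k {A, A'})) := by
  obtain ⟨t1, ht1, h1⟩ := hAB
  obtain ⟨t2, ht2, h2⟩ := hBC
  obtain ⟨t3, ht3, h3⟩ := hCA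
  -- the three ratios coincide
  have hsum : t1 • (B - A) + t2 • (C - B) + t3 • (A - C) = 0 := by
    rw [← h1, ← h2, ← h3]; abel
  have hzero : (t1 - t2) • (B - A) + (t2 - t3) • (C - A) = 0 := by
    linear_combination (norm := module) hsum
  have hw := affineIndependent_iff.1 hABC Finset.univ
    ![-((t1 - t2) + (t2 - t3)), t1 - t2, t2 - t3]
    (by simp [Fin.sum_univ_three])
    (by
      simp only [Fin.sum_univ_three, Matrix.cons_val_zero, Matrix.cons_val_one,
        Matrix.head_cons, Matrix.cons_val_two, Matrix.tail_cons]
      linear_combination (norm := module) hzero)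
  have h12 : t1 = t2 := sub_eq_zero.mp (by simpa using hw 1 (Finset.mem_univ _))
  have h23 : t2 = t3 := sub_eq_zero.mp (by simpa using hw 2 (Finset.mem_univ _))
  subst h12; subst h23
  set t := t1 with ht
  have hC'A' : C' - A' = t • (C - A) := by
    linear_combination (norm := module) h1 + h2
  constructor
  · -- not a translate : concurrency
    intro hnt
    have htne : t ≠ 1 := by
      rintro rfl
      exact hnt ⟨A' - A, by abel, by linear_combination (norm := module) h1,
        by linear_combination (norm := module) hC'A'⟩
    have h1t : (1 : k) - t ≠ 0 := sub_ne_zero.mpr (Ne.symm htne)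
    set s : k := (1 - t)⁻¹ with hs
    have hst : s * (1 - t) = 1 := inv_mul_cancel₀ h1t
    set O : Fin 2 → k := A + s • (A' - A) with hO
    have hAO : A' - O = t • (A - O) := by
      rw [hO]
      match_scalars
      · linear_combination -hst
      · linear_combination hst
    have hBO : B' - O = t • (B - O) := by
      linear_combination (norm := module) h1 + hAO
    have hCO : C' - O = t • (C - O) := by
      linear_combination (norm := module) hC'A' + hAO
    have key : ∀ P P' : Fin 2 → k, P' - O = t • (P - O) → Collinear k {P, P', O} := by
      intro P P' hP
      rw [collinear_iff_of_mem (show O ∈ ({P, P', O} : Set (Fin 2 → k)) by simp)]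
      refine ⟨P - O, fun p hp => ?_⟩
      rcases hp with rfl | rfl | rfl
      · exact ⟨1, by simp [vadd_eq_add]⟩
      · exact ⟨t, by rw [vadd_eq_add]; exact (eq_add_of_sub_eq hP)⟩
      · exact ⟨0, by simp⟩
    exact ⟨O, key A A' hAO, key B B' hBO, key C C' hCO⟩
  · -- translate : parallel lines
    rintro ⟨v, rfl, rfl, rfl⟩
    have hv : ∀ X : Fin 2 → k, X -ᵥ (X + v) = -v := fun X => by
      rw [vsub_eq_sub]; abel
    refine ⟨?_, ?_, ?_⟩ <;>
      · rw [AffineSubspace.affineSpan_pair_parallel_iff_vectorSpan_eq,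
          vectorSpan_pair, vectorSpan_pair, hv, hv]
end

section
/- Monge's three-circles theorem: given three circles in the Euclidean plane with distinct radii and pairwise non-concentric centers, the three external centers of similitude (intersection points of the pairs of external common tangents, equivalently the external homothety centers) are collinear. -/
/-!
Clearing denominators, `(r₂ - r₁) P₁₂ = r₂ O₁ - r₁ O₂`. Weighting these three relations by
`r₃`, `r₁`, `r₂` and adding them cancels every center, so
`r₃ (r₂ - r₁) P₁₂ + r₁ (r₃ - r₂) P₂₃ + r₂ (r₁ - r₃) P₃₁ = 0`. The weights sum to zero and
do not all vanish when the radii are distinct, so this is an affine dependence among the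
three similitude centers, i.e. they are collinear.
-/

/-- The external center of similitude of the circles with centers `O₁`, `O₂` and radii
`r₁`, `r₂` (with `r₁ ≠ r₂`). -/
noncomputable def extSimCenter (O₁ O₂ : Fin 2 → ℝ) (r₁ r₂ : ℝ) : Fin 2 → ℝ :=
  (r₂ - r₁)⁻¹ • (r₂ • O₁ - r₁ • O₂)

theorem collinear_of_smul_add_smul_add_smul_eq_zero {k V : Type*} [Field k] [AddCommGroup V]
    [Module k V] {x y z : V} {a b c : k} (hsum : a + b + c = 0) (hne : a ≠ 0 ∨ b ≠ 0 ∨ c ≠ 0)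
    (hcomb : a • x + b • y + c • z = 0) : Collinear k {x, y, z} := by
  rw [collinear_iff_not_affineIndependent_set, affineIndependent_iff_of_fintype]
  intro hind
  have hw : ∑ i, ![a, b, c] i = 0 := by simpa [Fin.sum_univ_three, add_assoc] using hsum
  have hzero := hind ![a, b, c] hw (by
    rw [Finset.weightedVSub_eq_linear_combination _ hw]
    simpa [Fin.sum_univ_three, add_assoc] using hcomb)
  rcases hne with h | h | h
  · exact h (hzero 0)
  · exact h (hzero 1)
  · exact h (hzero 2)

theorem sub_smul_extSimCenter {O₁ O₂ : Fin 2 → ℝ} {r₁ r₂ : ℝ} (h : r₁ ≠ r₂) :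
    (r₂ - r₁) • extSimCenter O₁ O₂ r₁ r₂ = r₂ • O₁ - r₁ • O₂ :=
  smul_inv_smul₀ (sub_ne_zero.2 h.symm) _

theorem extSimCenter_weighted_sum_eq_zero {O₁ O₂ O₃ : Fin 2 → ℝ} {r₁ r₂ r₃ : ℝ}
    (h₁₂ : r₁ ≠ r₂) (h₂₃ : r₂ ≠ r₃) (h₃₁ : r₃ ≠ r₁) :
    (r₃ * (r₂ - r₁)) • extSimCenter O₁ O₂ r₁ r₂ + (r₁ * (r₃ - r₂)) • extSimCenter O₂ O₃ r₂ r₃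
      + (r₂ * (r₁ - r₃)) • extSimCenter O₃ O₁ r₃ r₁ = 0 := by
  rw [mul_smul, mul_smul, mul_smul, sub_smul_extSimCenter h₁₂, sub_smul_extSimCenter h₂₃,
    sub_smul_extSimCenter h₃₁]
  module

theorem monge_three_circles_general (O₁ O₂ O₃ : Fin 2 → ℝ) (r₁ r₂ r₃ : ℝ)
    (h₁₂ : r₁ ≠ r₂) (h₂₃ : r₂ ≠ r₃) (h₃₁ : r₃ ≠ r₁) :
    Collinear ℝ {extSimCenter O₁ O₂ r₁ r₂, extSimCenter O₂ O₃ r₂ r₃,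
      extSimCenter O₃ O₁ r₃ r₁} := by
  refine collinear_of_smul_add_smul_add_smul_eq_zero (by ring) ?_
    (extSimCenter_weighted_sum_eq_zero h₁₂ h₂₃ h₃₁)
  by_contra! hweights
  obtain ⟨hw₁, hw₂, -⟩ := hweights
  have hr₃ : r₃ = 0 := (mul_eq_zero.1 hw₁).resolve_right (sub_ne_zero.2 h₁₂.symm)
  have hr₁ : r₁ = 0 := (mul_eq_zero.1 hw₂).resolve_right (sub_ne_zero.2 h₂₃.symm)
  exact h₃₁ (hr₃.trans hr₁.symm)

/-- **Monge's three-circles theorem.**  Given three circles in the Euclidean plane with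
pairwise distinct positive radii and non-collinear (in particular pairwise distinct)
centers, the three external centers of similitude are collinear. -/
theorem monge_three_circles (O₁ O₂ O₃ : Fin 2 → ℝ) (r₁ r₂ r₃ : ℝ)
    (hr₁ : 0 < r₁) (hr₂ : 0 < r₂) (hr₃ : 0 < r₃)
    (h₁₂ : r₁ ≠ r₂) (h₂₃ : r₂ ≠ r₃) (h₃₁ : r₃ ≠ r₁)
    (hcenters : ¬ Collinear ℝ {O₁, O₂, O₃}) :
    Collinear ℝ {extSimCenter O₁ O₂ r₁ r₂, extSimCenter O₂ O₃ r₂ r₃,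
      extSimCenter O₃ O₁ r₃ r₁} :=
  monge_three_circles_general O₁ O₂ O₃ r₁ r₂ r₃ h₁₂ h₂₃ h₃₁
end
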